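/- arXiv:1908.08110 — 3 statements merged into one kernel-verified Lean document; each statement's English description precedes it below -/
import Mathlib

section
/- Let P = 1 + p be a paravector in Cl(3,3) (with p = Σ p^i e_i, e_i = (1/2)(e_i^+ + e_i^-)), and let n^± = Σ n^i e_i^± with Σ (n^i)² = 1. Set N = n^+ n^-. Then -N P Ñ = 1 + p_R, where Ñ = n^- n^+ is the reversion of N and p_R = Σ (p^i - 2(Σ_j n^j p^j) n^i) e_i is the reflection of p in the plane with unit normal n. -/
/-!
Write `n⁺ = Σ nⁱ e⁺ᵢ`, `n⁻ = Σ nⁱ e⁻ᵢ`, `p⁺ = Σ pⁱ e⁺ᵢ`, `p⁻ = Σ pⁱ e⁻ᵢ` and `s = n · p`. The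
defining relations give `(n⁺)² = 1`, `(n⁻)² = -1`, `{n⁺, p⁺} = 2s`, `{n⁻, p⁻} = -2s`, and all
mixed `±` anticommutators vanish. Conjugating first by `n⁻` and then by `n⁺`, each step through
`u v u = {u, v} u - v u²`, turns `1 + ½ (p⁺ + p⁻)` into `-(1 + ½ (p⁺ + p⁻) - s (n⁺ + n⁻))`,
and `p - 2 s n` is exactly `½ (p⁺ + p⁻) - s (n⁺ + n⁻)` in the basis `eᵢ = ½ (e⁺ᵢ + e⁻ᵢ)`.
-/

theorem sum_smul_mul_add_sum_smul_mul {ι R A : Type*} [Fintype ι] [DecidableEq ι]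
    [CommSemiring R] [Semiring A] [Algebra R A] {f g : ι → A} {c : A}
    (h : ∀ i j, f i * g j + g j * f i = if i = j then c else 0) (a b : ι → R) :
    (∑ i, a i • f i) * (∑ j, b j • g j) + (∑ j, b j • g j) * (∑ i, a i • f i) =
      (∑ i, a i * b i) • c := by
  rw [Finset.sum_mul_sum, Finset.sum_mul_sum, Finset.sum_comm (γ := ι) (s := Finset.univ)
    (f := fun j i => b j • g j * a i • f i), ← Finset.sum_add_distrib, Finset.sum_smul]
  refine Finset.sum_congr rfl fun i _ => ?_
  simp_rw [← Finset.sum_add_distrib, smul_mul_smul_comm, mul_comm (b _), ← smul_add, h, smul_ite,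
    smul_zero, Finset.sum_ite_eq, Finset.mem_univ, if_true]

theorem sum_smul_half_smul_add {ι A : Type*} [Fintype ι] [AddCommGroup A] [Module ℝ A]
    (c : ι → ℝ) (f g : ι → A) :
    ∑ i, c i • ((1 / 2 : ℝ) • (f i + g i)) =
      (1 / 2 : ℝ) • (∑ i, c i • f i + ∑ i, c i • g i) := by
  simp only [smul_comm (c _), ← Finset.smul_sum, smul_add, Finset.sum_add_distrib]

theorem eq_of_add_self_eq_add_self {A : Type*} [Ring A] [Algebra ℝ A] {x y : A}
    (h : x + x = y + y) : x = y := by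
  simpa [← two_smul ℝ, smul_smul] using congrArg ((1 / 2 : ℝ) • ·) h

theorem mul_mul_self_eq {A : Type*} [Ring A] (u v : A) :
    u * v * u = (u * v + v * u) * u - v * (u * u) := by
  noncomm_ring

theorem neg_mul_one_add_half_smul_mul_eq {A : Type*} [Ring A] [Algebra ℝ A]
    {np nm pp pm : A} {s : ℝ} (hnp : np * np = 1) (hnm : nm * nm = -1)
    (hnpm : np * nm + nm * np = 0) (hnpp : np * pp + pp * np = s • 2)
    (hnmm : nm * pm + pm * nm = s • -2) (hnppm : np * pm + pm * np = 0)
    (hnmpp : nm * pp + pp * nm = 0) :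
    -(np * nm * (1 + (1 / 2 : ℝ) • (pp + pm)) * (nm * np)) =
      1 + ((1 / 2 : ℝ) • (pp + pm) - s • (np + nm)) := by
  have hconj_nm : nm * (1 + (1 / 2 : ℝ) • (pp + pm)) * nm =
      -1 + (1 / 2 : ℝ) • (pp + pm) - s • nm := by
    simp only [mul_add, add_mul, mul_smul_comm, smul_mul_assoc, mul_one, hnm,
      mul_mul_self_eq nm pp, mul_mul_self_eq nm pm, hnmpp, hnmm, neg_mul, mul_neg, zero_mul,
      two_mul]
    module
  have hconj_np : np * (-1 + (1 / 2 : ℝ) • (pp + pm) - s • nm) * np =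
      -1 - (1 / 2 : ℝ) • (pp + pm) + s • (np + nm) := by
    simp only [mul_add, add_mul, mul_sub, sub_mul, mul_neg, neg_mul, mul_smul_comm,
      smul_mul_assoc, mul_one, hnp, mul_mul_self_eq np pp, mul_mul_self_eq np pm,
      mul_mul_self_eq np nm, hnpp, hnppm, hnpm, zero_mul, two_mul]
    module
  calc _ = -(np * (nm * (1 + (1 / 2 : ℝ) • (pp + pm)) * nm) * np) := by noncomm_ring
    _ = _ := by rw [hconj_nm, hconj_np]; module

/-- In Cl(3,3), with `N = n⁺n⁻` for a unit `n`, and `Ñ = n⁻n⁺` its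
reversion, the paravector `P = 1 + p` satisfies `-N P Ñ = 1 + p_R`, where
`p_R = Σ (pᶦ - 2 (Σⱼ nʲpʲ) nᶦ) eᵢ` is the reflection of `p` in the plane with
unit normal `n`. -/
theorem cl33_reflection {A : Type*} [Ring A] [Algebra ℝ A]
    (ep em : Fin 3 → A)
    (hpp : ∀ i j, ep i * ep j + ep j * ep i = if i = j then 2 else 0)
    (hmm : ∀ i j, em i * em j + em j * em i = if i = j then -2 else 0)
    (hpm : ∀ i j, ep i * em j + em j * ep i = 0)
    (nc pc : Fin 3 → ℝ) (hn : ∑ i : Fin 3, (nc i) ^ 2 = 1) :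
    -((∑ i : Fin 3, nc i • ep i) * (∑ i : Fin 3, nc i • em i) *
        (1 + ∑ i : Fin 3, pc i • ((1/2 : ℝ) • (ep i + em i))) *
        ((∑ i : Fin 3, nc i • em i) * (∑ i : Fin 3, nc i • ep i))) =
      1 + ∑ i : Fin 3,
        (pc i - 2 * (∑ j : Fin 3, nc j * pc j) * nc i) •
          ((1/2 : ℝ) • (ep i + em i)) := by
  have hpm' (i j) : ep i * em j + em j * ep i = if i = j then 0 else 0 := by
    rw [hpm, ite_self]
  have hmp' (i j) : em i * ep j + ep j * em i = if i = j then 0 else 0 := by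
    rw [add_comm, hpm, ite_self]
  have hn' : ∑ i, nc i * nc i = 1 := by simpa only [sq] using hn
  have hreflect : ∑ i, (pc i - 2 * (∑ j, nc j * pc j) * nc i) • ((1 / 2 : ℝ) • (ep i + em i)) =
      (1 / 2 : ℝ) • (∑ i, pc i • ep i + ∑ i, pc i • em i) -
        (∑ j, nc j * pc j) • (∑ i, nc i • ep i + ∑ i, nc i • em i) := by
    simp only [sub_smul, Finset.sum_sub_distrib, mul_smul, ← Finset.smul_sum,
      sum_smul_half_smul_add]
    module
  rw [sum_smul_half_smul_add, hreflect]
  refine neg_mul_one_add_half_smul_mul_eq ?_ ?_ ?_ (sum_smul_mul_add_sum_smul_mul hpp nc pc)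
    (sum_smul_mul_add_sum_smul_mul hmm nc pc) ?_ ?_
  · refine eq_of_add_self_eq_add_self ?_
    rw [sum_smul_mul_add_sum_smul_mul hpp, hn', one_smul, one_add_one_eq_two]
  · refine eq_of_add_self_eq_add_self ?_
    rw [sum_smul_mul_add_sum_smul_mul hmm, hn', one_smul, ← neg_add, one_add_one_eq_two]
  all_goals rw [sum_smul_mul_add_sum_smul_mul (by assumption), smul_zero]
end

section
/- In Cl(3,3), let u, v be orthonormal coefficient vectors (Σ u^i v^i = 0, |u| = |v| = 1) and H = exp(η(u^- v^+ + v^- u^+)/2). Then for p = p_u u + p_v v + p_⊥ (with p_⊥ orthogonal to u and v, all viewed as vectors Σ x^i e_i), one has H p H̃ = (p_u cosh η + p_v sinh η) u + (p_v cosh η + p_u sinh η) v + p_⊥, a hyperbolic rotation by angle η in the plane of u and v. -/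
open Real

/-!
With `u± = ∑ uᵢ eᵢ±` and `v± = ∑ vᵢ eᵢ±`, orthonormality gives `(u⁺)² = (v⁺)² = 1`,
`(u⁻)² = (v⁻)² = -1`, and makes `u⁺, u⁻, v⁺, v⁻` and both halves of `p_⊥` pairwise
anticommute. Hence `L = v⁻u⁺` and `K = u⁻v⁺` square to `1`, and conjugating by
`cosh (η/2) + sinh (η/2) L` is the boost `u⁺ ↦ cosh η u⁺ + sinh η v⁻`,
`v⁻ ↦ cosh η v⁻ + sinh η u⁺` fixing `u⁻, v⁺, p_⊥`, because an element commuting with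
`L` is fixed while one anticommuting with it is multiplied by
`(cosh (η/2) + sinh (η/2) L)² = cosh η + sinh η L`. Likewise `K` boosts the pair `(v⁺, u⁻)`,
and the two boosts together rotate `u = (u⁺ + u⁻)/2` and `v = (v⁺ + v⁻)/2` hyperbolically.
-/

def AntiCommute {R : Type*} [Mul R] [Neg R] (a b : R) : Prop := a * b = -(b * a)

namespace AntiCommute

variable {R : Type*} [Ring R] {a b c : R}

theorem symm (h : AntiCommute a b) : AntiCommute b a := by
  rw [AntiCommute, h, neg_neg]

theorem add_left (ha : AntiCommute a c) (hb : AntiCommute b c) : AntiCommute (a + b) c := by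
  rw [AntiCommute, add_mul, mul_add, ha, hb, neg_add]

theorem smul_left {S : Type*} [Monoid S] [DistribMulAction S R] [IsScalarTower S R R]
    [SMulCommClass S R R] (h : AntiCommute a c) (r : S) : AntiCommute (r • a) c := by
  rw [AntiCommute, smul_mul_assoc, mul_smul_comm, h, smul_neg]

theorem commute_mul_right (hab : AntiCommute a b) (hac : AntiCommute a c) :
    Commute a (b * c) := by
  rw [Commute, SemiconjBy, ← mul_assoc, hab, neg_mul, mul_assoc, hac, mul_neg, neg_neg, mul_assoc]

theorem mul_right_of_commute (hab : AntiCommute a b) (hac : Commute a c) :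
    AntiCommute a (b * c) := by
  rw [AntiCommute, ← mul_assoc, hab, neg_mul, mul_assoc, hac.eq, mul_assoc]

theorem _root_.Commute.antiCommute_mul_right (hab : Commute a b) (hac : AntiCommute a c) :
    AntiCommute a (b * c) := by
  rw [AntiCommute, ← mul_assoc, hab.eq, mul_assoc, hac, mul_neg, mul_assoc]

theorem mul_mul_self_eq_one (hba : AntiCommute b a) (ha : a * a = 1) (hb : b * b = -1) :
    b * a * (b * a) = 1 := by
  rw [mul_assoc, ← mul_assoc a, hba.symm, neg_mul, mul_neg, ← mul_assoc, ← mul_assoc, hb,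
    neg_one_mul, neg_mul, ha, neg_neg]

end AntiCommute

section Boost

variable {A : Type*} [Ring A] [Algebra ℝ A] {K x : A}

/-- `x ↦ R x R̃` for the rotor `R = cosh (θ/2) + sinh (θ/2) K`, which is `exp (θ K / 2)` when
`K² = 1`. -/
noncomputable def boostConj (θ : ℝ) (K : A) : A →ₗ[ℝ] A :=
  LinearMap.mulLeft ℝ (cosh (θ / 2) • 1 + sinh (θ / 2) • K) ∘ₗ
    LinearMap.mulRight ℝ (cosh (θ / 2) • 1 - sinh (θ / 2) • K)

theorem boostConj_apply (θ : ℝ) (K x : A) :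
    boostConj θ K x =
      (cosh (θ / 2) • 1 + sinh (θ / 2) • K) * x * (cosh (θ / 2) • 1 - sinh (θ / 2) • K) := by
  simp only [boostConj, LinearMap.comp_apply, LinearMap.mulLeft_apply, LinearMap.mulRight_apply,
    mul_assoc]

theorem boost_mul_boost_rev (θ : ℝ) (hK : K * K = 1) :
    (cosh (θ / 2) • 1 + sinh (θ / 2) • K) * (cosh (θ / 2) • 1 - sinh (θ / 2) • K) = 1 := by
  have h := cosh_sq_sub_sinh_sq (θ / 2)
  simp only [add_mul, mul_sub, smul_mul_smul_comm, one_mul, mul_one, hK]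
  linear_combination (norm := module) h • (1 : A)

theorem boost_mul_self (θ : ℝ) (hK : K * K = 1) :
    (cosh (θ / 2) • 1 + sinh (θ / 2) • K) * (cosh (θ / 2) • 1 + sinh (θ / 2) • K) =
      cosh θ • 1 + sinh θ • K := by
  have hc := cosh_two_mul (θ / 2)
  have hs := sinh_two_mul (θ / 2)
  rw [mul_div_cancel₀ θ two_ne_zero] at hc hs
  simp only [add_mul, mul_add, smul_mul_smul_comm, one_mul, mul_one, hK]
  linear_combination (norm := module) hc.symm • (1 : A) + hs.symm • K

theorem boostConj_of_commute (θ : ℝ) (hK : K * K = 1) (hx : Commute x K) :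
    boostConj θ K x = x := by
  have hR : Commute x (cosh (θ / 2) • 1 + sinh (θ / 2) • K) :=
    ((Commute.one_right x).smul_right _).add_right (hx.smul_right _)
  rw [boostConj_apply, ← hR.eq, mul_assoc, boost_mul_boost_rev θ hK, mul_one]

theorem boostConj_of_antiCommute (θ : ℝ) (hK : K * K = 1) (hx : AntiCommute x K) :
    boostConj θ K x = cosh θ • x + sinh θ • (K * x) := by
  have hR : x * (cosh (θ / 2) • 1 - sinh (θ / 2) • K) =
      (cosh (θ / 2) • 1 + sinh (θ / 2) • K) * x := by
    rw [mul_sub, mul_smul_comm, mul_smul_comm, hx, add_mul, smul_mul_assoc, smul_mul_assoc,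
      mul_one, one_mul, smul_neg, sub_neg_eq_add]
  rw [boostConj_apply, mul_assoc, hR, ← mul_assoc, boost_mul_self θ hK, add_mul, smul_mul_assoc,
    smul_mul_assoc, one_mul]

section BoostPlane

variable {a b : A}

theorem boostConj_mul_apply_right (θ : ℝ) (hba : AntiCommute b a) (ha : a * a = 1)
    (hb : b * b = -1) : boostConj θ (b * a) a = cosh θ • a + sinh θ • b := by
  rw [boostConj_of_antiCommute θ (hba.mul_mul_self_eq_one ha hb)
    (hba.symm.mul_right_of_commute (Commute.refl a)), mul_assoc, ha, mul_one]

theorem boostConj_mul_apply_left (θ : ℝ) (hba : AntiCommute b a) (ha : a * a = 1)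
    (hb : b * b = -1) : boostConj θ (b * a) b = cosh θ • b + sinh θ • a := by
  rw [boostConj_of_antiCommute θ (hba.mul_mul_self_eq_one ha hb)
    ((Commute.refl b).antiCommute_mul_right hba), mul_assoc, hba.symm, mul_neg, ← mul_assoc, hb,
    neg_one_mul, neg_neg]

theorem boostConj_mul_of_antiCommute (θ : ℝ) (hba : AntiCommute b a) (ha : a * a = 1)
    (hb : b * b = -1) (hxb : AntiCommute x b) (hxa : AntiCommute x a) :
    boostConj θ (b * a) x = x :=
  boostConj_of_commute θ (hba.mul_mul_self_eq_one ha hb) (hxb.commute_mul_right hxa)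

end BoostPlane

theorem boostConj_boostConj_of_frame {up um vp vm w : A} (θ pu pv : ℝ)
    (hup : up * up = 1) (hvp : vp * vp = 1) (hum : um * um = -1) (hvm : vm * vm = -1)
    (hupum : AntiCommute up um) (hupvp : AntiCommute up vp) (hupvm : AntiCommute up vm)
    (humvp : AntiCommute um vp) (humvm : AntiCommute um vm) (hvpvm : AntiCommute vp vm)
    (hwup : AntiCommute w up) (hwum : AntiCommute w um) (hwvp : AntiCommute w vp)
    (hwvm : AntiCommute w vm) :
    boostConj θ (um * vp) (boostConj θ (vm * up)
        (pu • ((1 / 2 : ℝ) • (up + um)) + pv • ((1 / 2 : ℝ) • (vp + vm)) + w)) =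
      (pu * cosh θ + pv * sinh θ) • ((1 / 2 : ℝ) • (up + um)) +
        (pv * cosh θ + pu * sinh θ) • ((1 / 2 : ℝ) • (vp + vm)) + w := by
  simp only [map_add, map_smul]
  rw [boostConj_mul_apply_right θ hupvm.symm hup hvm,
    boostConj_mul_apply_left θ hupvm.symm hup hvm,
    boostConj_mul_of_antiCommute θ hupvm.symm hup hvm humvm hupum.symm,
    boostConj_mul_of_antiCommute θ hupvm.symm hup hvm hvpvm hupvp.symm,
    boostConj_mul_of_antiCommute θ hupvm.symm hup hvm hwvm hwup]
  simp only [map_add, map_smul]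
  rw [boostConj_mul_apply_right θ humvp hvp hum, boostConj_mul_apply_left θ humvp hvp hum,
    boostConj_mul_of_antiCommute θ humvp hvp hum hupum hupvp,
    boostConj_mul_of_antiCommute θ humvp hvp hum humvm.symm hvpvm.symm,
    boostConj_mul_of_antiCommute θ humvp hvp hum hwum hwvp]
  module

end Boost

theorem eq_of_add_self_eq_add_self_s10 {M : Type*} [AddCommGroup M] [Module ℝ M] {x y : M}
    (h : x + x = y + y) : x = y := by
  rw [← two_smul ℝ x, ← two_smul ℝ y] at h
  exact smul_right_injective M two_ne_zero h

theorem sum_smul_half_add {ι A : Type*} [Fintype ι] [Ring A] [Algebra ℝ A] (e f : ι → A)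
    (a : ι → ℝ) :
    ∑ i, a i • ((1 / 2 : ℝ) • (e i + f i)) = (1 / 2 : ℝ) • (∑ i, a i • e i + ∑ i, a i • f i) := by
  simp only [smul_comm (a _), ← Finset.smul_sum, smul_add, Finset.sum_add_distrib]

section SumSmul

variable {ι A : Type*} [Fintype ι] [DecidableEq ι] [Ring A]

theorem sum_smul_mul_sum_smul_add {R : Type*} [CommSemiring R] [Algebra R A] {e f : ι → A}
    {c : A}
    (h : ∀ i j, e i * f j + f j * e i = if i = j then c else 0) (a b : ι → R) :
    (∑ i, a i • e i) * (∑ i, b i • f i) + (∑ i, b i • f i) * (∑ i, a i • e i) = (a ⬝ᵥ b) • c := by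
  calc (∑ i, a i • e i) * (∑ i, b i • f i) + (∑ i, b i • f i) * (∑ i, a i • e i)
      = ∑ i, ∑ j, (a i * b j) • (e i * f j + f j * e i) := by
        simp only [Finset.sum_mul_sum, smul_mul_smul_comm, smul_add, Finset.sum_add_distrib]
        rw [Finset.sum_comm (f := fun i j => (b i * a j) • (f i * e j))]
        simp only [mul_comm (b _)]
    _ = (a ⬝ᵥ b) • c := by
        simp only [h, smul_ite, smul_zero, Finset.sum_ite_eq, Finset.mem_univ, if_true, dotProduct,
          Finset.sum_smul]

variable [Algebra ℝ A] {ep em : ι → A} {a c : ι → ℝ}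

theorem antiCommute_sum_smul_of_dotProduct_eq_zero {e f : ι → A} {z : A}
    (h : ∀ i j, e i * f j + f j * e i = if i = j then z else 0) (hca : c ⬝ᵥ a = 0) :
    AntiCommute (∑ i, c i • e i) (∑ i, a i • f i) :=
  eq_neg_of_add_eq_zero_left (by rw [sum_smul_mul_sum_smul_add h, hca, zero_smul])

theorem antiCommute_sum_smul {e f : ι → A} (h : ∀ i j, e i * f j + f j * e i = 0) (c a : ι → ℝ) :
    AntiCommute (∑ i, c i • e i) (∑ i, a i • f i) :=
  eq_neg_of_add_eq_zero_left (by rw [sum_smul_mul_sum_smul_add (c := 0) (by simp [h]), smul_zero])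

theorem sum_smul_mul_self_eq_one (hpp : ∀ i j, ep i * ep j + ep j * ep i = if i = j then 2 else 0)
    (ha : a ⬝ᵥ a = 1) : (∑ i, a i • ep i) * (∑ i, a i • ep i) = 1 := by
  refine eq_of_add_self_eq_add_self_s10 ?_
  rw [sum_smul_mul_sum_smul_add hpp, ha, one_smul, one_add_one_eq_two]

theorem sum_smul_mul_self_eq_neg_one
    (hmm : ∀ i j, em i * em j + em j * em i = if i = j then -2 else 0)
    (ha : a ⬝ᵥ a = 1) : (∑ i, a i • em i) * (∑ i, a i • em i) = -1 := by
  refine eq_of_add_self_eq_add_self_s10 ?_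
  rw [sum_smul_mul_sum_smul_add hmm, ha, one_smul, ← neg_add, one_add_one_eq_two]

theorem antiCommute_half_add_sum_smul_plus
    (hpp : ∀ i j, ep i * ep j + ep j * ep i = if i = j then 2 else 0)
    (hpm : ∀ i j, ep i * em j + em j * ep i = 0) (hca : c ⬝ᵥ a = 0) :
    AntiCommute ((1 / 2 : ℝ) • (∑ i, c i • ep i + ∑ i, c i • em i)) (∑ i, a i • ep i) :=
  ((antiCommute_sum_smul_of_dotProduct_eq_zero hpp hca).add_left
    (antiCommute_sum_smul hpm a c).symm).smul_left _

theorem antiCommute_half_add_sum_smul_minus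
    (hmm : ∀ i j, em i * em j + em j * em i = if i = j then -2 else 0)
    (hpm : ∀ i j, ep i * em j + em j * ep i = 0) (hca : c ⬝ᵥ a = 0) :
    AntiCommute ((1 / 2 : ℝ) • (∑ i, c i • ep i + ∑ i, c i • em i)) (∑ i, a i • em i) :=
  ((antiCommute_sum_smul hpm c a).add_left
    (antiCommute_sum_smul_of_dotProduct_eq_zero hmm hca)).smul_left _

end SumSmul

/-- In Cl(3,3), with `u, v` orthonormal and
`H = exp(η(u⁻v⁺ + v⁻u⁺)/2)` (computed via the factorization
`exp(η u⁻v⁺/2) exp(η v⁻u⁺/2)`, using `(u⁻v⁺)² = (v⁻u⁺)² = 1`),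
conjugation `p ↦ H p H̃` is a hyperbolic rotation by `η` in the plane of
`u, v`, fixing the orthogonal component. -/
theorem cl33_hyperbolic_rotation {A : Type*} [Ring A] [Algebra ℝ A]
    (ep em : Fin 3 → A)
    (hpp : ∀ i j, ep i * ep j + ep j * ep i = if i = j then 2 else 0)
    (hmm : ∀ i j, em i * em j + em j * em i = if i = j then -2 else 0)
    (hpm : ∀ i j, ep i * em j + em j * ep i = 0)
    (uc vc wc : Fin 3 → ℝ) (η pu pv : ℝ)
    (horth : ∑ i : Fin 3, uc i * vc i = 0)
    (hu : ∑ i : Fin 3, (uc i) ^ 2 = 1)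
    (hv : ∑ i : Fin 3, (vc i) ^ 2 = 1)
    (hwu : ∑ i : Fin 3, wc i * uc i = 0)
    (hwv : ∑ i : Fin 3, wc i * vc i = 0) :
    ((Real.cosh (η/2) • (1 : A) +
        Real.sinh (η/2) • ((∑ i : Fin 3, uc i • em i) * (∑ i : Fin 3, vc i • ep i))) *
      (Real.cosh (η/2) • (1 : A) +
        Real.sinh (η/2) • ((∑ i : Fin 3, vc i • em i) * (∑ i : Fin 3, uc i • ep i)))) *
    (pu • (∑ i : Fin 3, uc i • ((1/2 : ℝ) • (ep i + em i))) +
      pv • (∑ i : Fin 3, vc i • ((1/2 : ℝ) • (ep i + em i))) +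
      ∑ i : Fin 3, wc i • ((1/2 : ℝ) • (ep i + em i))) *
    ((Real.cosh (η/2) • (1 : A) -
        Real.sinh (η/2) • ((∑ i : Fin 3, vc i • em i) * (∑ i : Fin 3, uc i • ep i))) *
      (Real.cosh (η/2) • (1 : A) -
        Real.sinh (η/2) • ((∑ i : Fin 3, uc i • em i) * (∑ i : Fin 3, vc i • ep i)))) =
    (pu * Real.cosh η + pv * Real.sinh η) •
        (∑ i : Fin 3, uc i • ((1/2 : ℝ) • (ep i + em i))) +
      (pv * Real.cosh η + pu * Real.sinh η) •
        (∑ i : Fin 3, vc i • ((1/2 : ℝ) • (ep i + em i))) +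
      ∑ i : Fin 3, wc i • ((1/2 : ℝ) • (ep i + em i)) := by
  have hu' : uc ⬝ᵥ uc = 1 := by simpa only [dotProduct, sq] using hu
  have hv' : vc ⬝ᵥ vc = 1 := by simpa only [dotProduct, sq] using hv
  have key := boostConj_boostConj_of_frame η pu pv
    (sum_smul_mul_self_eq_one hpp hu') (sum_smul_mul_self_eq_one hpp hv')
    (sum_smul_mul_self_eq_neg_one hmm hu') (sum_smul_mul_self_eq_neg_one hmm hv')
    (antiCommute_sum_smul hpm uc uc) (antiCommute_sum_smul_of_dotProduct_eq_zero hpp horth)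
    (antiCommute_sum_smul hpm uc vc) (antiCommute_sum_smul hpm vc uc).symm
    (antiCommute_sum_smul_of_dotProduct_eq_zero hmm horth) (antiCommute_sum_smul hpm vc vc)
    (antiCommute_half_add_sum_smul_plus hpp hpm hwu)
    (antiCommute_half_add_sum_smul_minus hmm hpm hwu)
    (antiCommute_half_add_sum_smul_plus hpp hpm hwv)
    (antiCommute_half_add_sum_smul_minus hmm hpm hwv)
  rw [sum_smul_half_add, sum_smul_half_add, sum_smul_half_add]
  simpa only [boostConj_apply, mul_assoc] using key
end

section
/- In Cl(3,3), let u be a unit coefficient vector and D = exp(t u^- u^+ / 2) = cosh(t/2) + sinh(t/2) u^- u^+. Then for any vector p = p_∥ + p_⊥ with p_∥ = (Σ p^i u^i) u the component along u and p_⊥ orthogonal to u (all as vectors Σ x^i e_i), one has D p D̃ = e^t p_∥ + p_⊥, a non-uniform scaling by e^t in the direction u. -/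
/-!
Write `U± = ∑ uᵢ e±ᵢ`. Then `U₊² = 1`, `U₋² = -1` and `U₊U₋ = -U₋U₊`, so `B = U₋U₊` satisfies
`B² = 1`, `B (U₊ + U₋) = U₊ + U₋ = -(U₊ + U₋) B`, and `B` commutes with every vector orthogonal
to `u`, being a product of two elements that anticommute with it. With `c = cosh (t/2)`,
`s = sinh (t/2)` this gives `(c + sB) p∥ (c - sB) = (c + s)² p∥ = eᵗ p∥` and
`(c + sB) p⊥ (c - sB) = (c² - s²) p⊥ = p⊥`.
-/

open Finset

section Anticommutator

variable {ι R A : Type*} [Fintype ι]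

theorem sum_smul_mul_sum_smul_add_mul [CommSemiring R] [Semiring A] [Algebra R A]
    (f g : ι → R) (x y : ι → A) :
    (∑ i, f i • x i) * (∑ j, g j • y j) + (∑ j, g j • y j) * (∑ i, f i • x i) =
      ∑ i, ∑ j, (f i * g j) • (x i * y j + y j * x i) := by
  simp only [sum_mul_sum, smul_add, sum_add_distrib, smul_mul_smul_comm]
  rw [sum_comm (s := univ) (t := univ) (f := fun j i => (g j * f i) • (y j * x i))]
  simp only [mul_comm (g _)]

theorem sum_smul_mul_sum_smul_add_mul_of_anticommute [CommSemiring R] [Semiring A]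
    [Algebra R A] (f g : ι → R) {x y : ι → A} (h : ∀ i j, x i * y j + y j * x i = 0) :
    (∑ i, f i • x i) * (∑ j, g j • y j) + (∑ j, g j • y j) * (∑ i, f i • x i) = 0 := by
  simp [sum_smul_mul_sum_smul_add_mul, h]

theorem sum_smul_mul_sum_smul_add_mul_of_ite [DecidableEq ι] [CommSemiring R] [Semiring A]
    [Algebra R A] (f g : ι → R) {x y : ι → A} {c : A}
    (h : ∀ i j, x i * y j + y j * x i = if i = j then c else 0) :
    (∑ i, f i • x i) * (∑ j, g j • y j) + (∑ j, g j • y j) * (∑ i, f i • x i) =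
      (∑ i, f i * g i) • c := by
  simp [sum_smul_mul_sum_smul_add_mul, h, smul_ite, sum_smul]

theorem sum_smul_mul_self_of_ite [DecidableEq ι] [Field R] [CharZero R] [Ring A] [Algebra R A]
    (f : ι → R) {x : ι → A} {c : A}
    (h : ∀ i j, x i * x j + x j * x i = if i = j then 2 * c else 0) :
    (∑ i, f i • x i) * (∑ i, f i • x i) = (∑ i, f i ^ 2) • c := by
  have h2 := sum_smul_mul_sum_smul_add_mul_of_ite f f h
  rw [two_mul, smul_add, ← two_smul R, ← two_smul R] at h2
  simp only [sq]
  exact smul_right_injective A (two_ne_zero (α := R)) h2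

end Anticommutator

theorem sum_smul_smul_add {ι R M : Type*} [Fintype ι] [CommSemiring R] [AddCommMonoid M]
    [Module R M] (f : ι → R) (c : R) (x y : ι → M) :
    ∑ i, f i • c • (x i + y i) = c • (∑ i, f i • x i + ∑ i, f i • y i) := by
  simp only [smul_add, sum_add_distrib, smul_sum, smul_comm c]

section NullPair

variable {A : Type*} [Ring A] {p m : A}

theorem commute_mul_of_anticommute {a b x : A} (ha : x * a + a * x = 0)
    (hb : x * b + b * x = 0) : Commute (a * b) x := by
  have ha' := eq_neg_of_add_eq_zero_right ha
  have hb' := eq_neg_of_add_eq_zero_right hb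
  calc a * b * x = -(a * x * b) := by rw [mul_assoc, hb', mul_neg, ← mul_assoc]
    _ = x * (a * b) := by rw [ha', neg_mul, neg_neg, mul_assoc]

theorem mul_mul_self_of_null_pair (hp : p * p = 1) (hm : m * m = -1)
    (hpm : p * m + m * p = 0) : m * p * (m * p) = 1 := by
  rw [add_eq_zero_iff_eq_neg] at hpm
  rw [mul_assoc, ← mul_assoc p, hpm, neg_mul, mul_assoc, hp, mul_one, mul_neg, hm, neg_neg]

theorem mul_mul_add_of_null_pair (hp : p * p = 1) (hm : m * m = -1)
    (hpm : p * m + m * p = 0) : m * p * (p + m) = p + m := by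
  rw [add_eq_zero_iff_eq_neg] at hpm
  rw [mul_add, mul_assoc, hp, mul_one, mul_assoc, hpm, mul_neg, ← mul_assoc, hm, neg_mul,
    one_mul, neg_neg, add_comm]

theorem add_mul_mul_of_null_pair (hp : p * p = 1) (hm : m * m = -1)
    (hpm : p * m + m * p = 0) : (p + m) * (m * p) = -(p + m) := by
  rw [add_eq_zero_iff_eq_neg] at hpm
  rw [add_mul, ← mul_assoc, hpm, neg_mul, mul_assoc, hp, mul_one, ← mul_assoc, hm, neg_mul,
    one_mul, neg_add, add_comm]

end NullPair

open Real in
theorem boost_conj {A : Type*} [Ring A] [Algebra ℝ A] (t a : ℝ) {B V W : A}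
    (hB : B * B = 1) (hBV : B * V = V) (hVB : V * B = -V) (hBW : Commute B W) :
    (cosh (t / 2) • (1 : A) + sinh (t / 2) • B) * (a • V + W) *
        (cosh (t / 2) • (1 : A) + sinh (t / 2) • -B) =
      (exp t * a) • V + W := by
  have hWBB : W * B * B = W := by rw [mul_assoc, hB, mul_one]
  have hcs : cosh (t / 2) ^ 2 - sinh (t / 2) ^ 2 = 1 := cosh_sq_sub_sinh_sq _
  have hexp : (cosh (t / 2) + sinh (t / 2)) ^ 2 = exp t := by
    rw [cosh_add_sinh, ← exp_nat_mul]; ring_nf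
  simp only [mul_add, add_mul, smul_mul_assoc, mul_smul_comm, one_mul, mul_one, mul_neg,
    smul_neg, hBV, hVB, hBW.eq, hWBB]
  match_scalars
  · linear_combination a * hexp
  · linear_combination hcs
  · ring

/-- In Cl(3,3), with `u` a unit coefficient vector and
`D = exp(t u⁻u⁺/2) = cosh(t/2) + sinh(t/2) u⁻u⁺` (reversion
`D̃ = cosh(t/2) + sinh(t/2) u⁺u⁻`), conjugation scales the component of a
vector along `u` by `eᵗ` and fixes the orthogonal component. -/
theorem cl33_nonuniform_scale {A : Type*} [Ring A] [Algebra ℝ A]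
    (ep em : Fin 3 → A)
    (hpp : ∀ i j, ep i * ep j + ep j * ep i = if i = j then 2 else 0)
    (hmm : ∀ i j, em i * em j + em j * em i = if i = j then -2 else 0)
    (hpm : ∀ i j, ep i * em j + em j * ep i = 0)
    (uc wc : Fin 3 → ℝ) (t a : ℝ)
    (hu : ∑ i : Fin 3, (uc i) ^ 2 = 1)
    (hwu : ∑ i : Fin 3, wc i * uc i = 0) :
    (Real.cosh (t/2) • (1 : A) +
        Real.sinh (t/2) • ((∑ i : Fin 3, uc i • em i) * (∑ i : Fin 3, uc i • ep i))) *
      (a • (∑ i : Fin 3, uc i • ((1/2 : ℝ) • (ep i + em i))) +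
        ∑ i : Fin 3, wc i • ((1/2 : ℝ) • (ep i + em i))) *
      (Real.cosh (t/2) • (1 : A) +
        Real.sinh (t/2) • ((∑ i : Fin 3, uc i • ep i) * (∑ i : Fin 3, uc i • em i))) =
    (Real.exp t * a) • (∑ i : Fin 3, uc i • ((1/2 : ℝ) • (ep i + em i))) +
      ∑ i : Fin 3, wc i • ((1/2 : ℝ) • (ep i + em i)) := by
  set up := ∑ i, uc i • ep i
  set um := ∑ i, uc i • em i
  have hmp : ∀ i j, em i * ep j + ep j * em i = 0 := fun i j => by rw [add_comm, hpm]
  have hup : up * up = 1 := by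
    rw [sum_smul_mul_self_of_ite uc fun i j => by rw [hpp, mul_one], hu, one_smul]
  have hum : um * um = -1 := by
    rw [sum_smul_mul_self_of_ite uc fun i j => by rw [hmm, mul_neg_one], hu, one_smul]
  have hupm : up * um + um * up = 0 := sum_smul_mul_sum_smul_add_mul_of_anticommute uc uc hpm
  have hwp : Commute (um * up) (∑ i, wc i • ep i) := commute_mul_of_anticommute
    (sum_smul_mul_sum_smul_add_mul_of_anticommute wc uc hpm)
    (by rw [sum_smul_mul_sum_smul_add_mul_of_ite wc uc hpp, hwu, zero_smul])
  have hwm : Commute (um * up) (∑ i, wc i • em i) := commute_mul_of_anticommute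
    (by rw [sum_smul_mul_sum_smul_add_mul_of_ite wc uc hmm, hwu, zero_smul])
    (sum_smul_mul_sum_smul_add_mul_of_anticommute wc uc hmp)
  rw [sum_smul_smul_add, sum_smul_smul_add, eq_neg_of_add_eq_zero_left hupm]
  refine boost_conj t a (mul_mul_self_of_null_pair hup hum hupm) ?_ ?_
    ((hwp.add_right hwm).smul_right _)
  · rw [mul_smul_comm, mul_mul_add_of_null_pair hup hum hupm]
  · rw [smul_mul_assoc, add_mul_mul_of_null_pair hup hum hupm, smul_neg]
end
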